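/- Let n and ℓ be positive integers and A, B ∈ ℝ^{n×ℓ}. Then there exists an orthogonal matrix W ∈ O(n) such that WABᵀ is a positive semidefinite symmetric matrix and d_{O(n)}(A,B) = ‖WA − B‖ = d_{U(n)}(A,B), where A and B are regarded as complex matrices in the last expression. In particular, d_{O(n)}(A,B) = d_{U(n)}(A,B) for all real A, B. -/

import Mathlib

/-!
Polar decomposition gives `W ∈ O(n)` with `P := W A Bᵀ` positive semidefinite. For every unitary
`V`, `‖VA − B‖² = ‖A‖² + ‖B‖² − 2 Re tr (V A Bᵀ)`, and `V A Bᵀ = (V Wᵀ) P` with `V Wᵀ` unitary.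
Since `Re tr (U P) ≤ tr P` for every unitary `U` and every `P ⪰ 0`, the orthogonal `W` minimises
`‖VA − B‖` over all of `U(n)`, hence also over `O(n) ⊆ U(n)`.
-/

open Matrix
open scoped ComplexOrder

/-- Frobenius norm of a real matrix: `‖A‖ = √(trace (A Aᵀ))`. -/
noncomputable def frobR {n l : ℕ} (A : Matrix (Fin n) (Fin l) ℝ) : ℝ :=
  Real.sqrt (Matrix.trace (A * Aᵀ))

/-- Frobenius norm of a complex matrix: `‖A‖ = √(trace (A Aᴴ))`. -/
noncomputable def frobC {n l : ℕ} (A : Matrix (Fin n) (Fin l) ℂ) : ℝ :=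
  Real.sqrt (Matrix.trace (A * Aᴴ)).re

open Classical in
/-- The unique positive semidefinite square root of a positive semidefinite real
symmetric matrix (junk value `0` if `M` is not positive semidefinite). -/
noncomputable def matSqrtR {k : ℕ} (M : Matrix (Fin k) (Fin k) ℝ) : Matrix (Fin k) (Fin k) ℝ :=
  if h : M.PosSemidef then
    (h.1.eigenvectorUnitary : Matrix (Fin k) (Fin k) ℝ) *
      Matrix.diagonal (((↑) : ℝ → ℝ) ∘ Real.sqrt ∘ h.1.eigenvalues) *
      (star h.1.eigenvectorUnitary : Matrix (Fin k) (Fin k) ℝ)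
  else 0

open Classical in
/-- The unique positive semidefinite square root of a positive semidefinite hermitian
matrix (junk value `0` if `M` is not positive semidefinite). -/
noncomputable def matSqrtC {k : ℕ} (M : Matrix (Fin k) (Fin k) ℂ) : Matrix (Fin k) (Fin k) ℂ :=
  if h : M.PosSemidef then
    (h.1.eigenvectorUnitary : Matrix (Fin k) (Fin k) ℂ) *
      Matrix.diagonal (((↑) : ℝ → ℂ) ∘ Real.sqrt ∘ h.1.eigenvalues) *
      (star h.1.eigenvectorUnitary : Matrix (Fin k) (Fin k) ℂ)
  else 0

/-- Orbit distance for the orthogonal group `O(n)` acting by left multiplication. -/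
noncomputable def dO {n l : ℕ} (A B : Matrix (Fin n) (Fin l) ℝ) : ℝ :=
  sInf {x | ∃ W ∈ Matrix.orthogonalGroup (Fin n) ℝ, x = frobR (W * A - B)}

/-- Orbit distance for the unitary group `U(n)` acting by left multiplication. -/
noncomputable def dU {n l : ℕ} (A B : Matrix (Fin n) (Fin l) ℂ) : ℝ :=
  sInf {x | ∃ W ∈ Matrix.unitaryGroup (Fin n) ℂ, x = frobC (W * A - B)}

/-- `q𝟙ᵀ` : the `n × l` matrix each of whose columns equals `q` (real case). -/
def colMatR {n l : ℕ} (q : Fin n → ℝ) : Matrix (Fin n) (Fin l) ℝ :=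
  Matrix.of fun i _ => q i

/-- `q𝟙ᵀ` : the `n × l` matrix each of whose columns equals `q` (complex case). -/
def colMatC {n l : ℕ} (q : Fin n → ℂ) : Matrix (Fin n) (Fin l) ℂ :=
  Matrix.of fun i _ => q i

/-- Orbit distance for the euclidean group `E(n) = O(n) ⋉ ℝⁿ` acting columnwise. -/
noncomputable def dE {n l : ℕ} (A B : Matrix (Fin n) (Fin l) ℝ) : ℝ :=
  sInf {x | ∃ P ∈ Matrix.orthogonalGroup (Fin n) ℝ, ∃ q : Fin n → ℝ,
    x = frobR (P * A + colMatR q - B)}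

/-- Orbit distance for the complex euclidean group `F(n) = U(n) ⋉ ℂⁿ` acting columnwise. -/
noncomputable def dF {n l : ℕ} (A B : Matrix (Fin n) (Fin l) ℂ) : ℝ :=
  sInf {x | ∃ P ∈ Matrix.unitaryGroup (Fin n) ℂ, ∃ q : Fin n → ℂ,
    x = frobC (P * A + colMatC q - B)}

/-- Column-centering `π` : subtract from each column the average of all columns (real case). -/
noncomputable def centerR {n l : ℕ} (A : Matrix (Fin n) (Fin l) ℝ) : Matrix (Fin n) (Fin l) ℝ :=
  Matrix.of fun i j => A i j - (∑ k, A i k) / (l : ℝ)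

/-- Column-centering `π_ℂ` : subtract from each column the average of all columns (complex case). -/
noncomputable def centerC {n l : ℕ} (A : Matrix (Fin n) (Fin l) ℂ) : Matrix (Fin n) (Fin l) ℂ :=
  Matrix.of fun i j => A i j - (∑ k, A i k) / (l : ℂ)

namespace Matrix

section Unitary

variable {𝕜 : Type*} [RCLike 𝕜] {m k : Type*} [Fintype m] [DecidableEq m] [Fintype k]

theorem inner_toEuclideanLin_self [DecidableEq k] (X : Matrix m k 𝕜) (v : EuclideanSpace 𝕜 k) :
    inner 𝕜 (toEuclideanLin X v) (toEuclideanLin X v) =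
      inner 𝕜 v (toEuclideanLin (Xᴴ * X) v) := by
  rw [toLpLin_mul 2 2 2, LinearMap.comp_apply, toEuclideanLin_conjTranspose_eq_adjoint,
    LinearMap.adjoint_inner_right]

theorem exists_mem_unitaryGroup_mul_eq_of_conjTranspose_mul_self_eq [DecidableEq k]
    {X Y : Matrix m k 𝕜} (h : Xᴴ * X = Yᴴ * Y) :
    ∃ U ∈ unitaryGroup m 𝕜, U * X = Y := by
  set f := toEuclideanLin X
  set g := toEuclideanLin Y
  have hnorm : ∀ v, ‖g v‖ = ‖f v‖ := fun v => by
    rw [norm_eq_sqrt_re_inner (𝕜 := 𝕜), norm_eq_sqrt_re_inner (𝕜 := 𝕜),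
      inner_toEuclideanLin_self, inner_toEuclideanLin_self, h]
  have hker : LinearMap.ker f ≤ LinearMap.ker g := fun v hv => by
    simpa [← norm_eq_zero, hnorm] using hv
  -- `f v ↦ g v` is a well-defined isometry on the range of `f`; extend it to the whole space.
  let L : LinearMap.range f →ₗ[𝕜] EuclideanSpace 𝕜 m :=
    (LinearMap.ker f).liftQ g hker ∘ₗ f.quotKerEquivRange.symm.toLinearMap
  have hL : ∀ v, L ⟨f v, LinearMap.mem_range_self f v⟩ = g v := fun v => by
    simp [L, LinearMap.quotKerEquivRange_symm_apply_image]
  let T : EuclideanSpace 𝕜 m ≃ₗᵢ[𝕜] EuclideanSpace 𝕜 m :=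
    (LinearIsometry.extend ⟨L, by rintro ⟨_, v, rfl⟩; simp [hL, hnorm]⟩).toLinearIsometryEquiv rfl
  have hT : ∀ v, T (f v) = g v := fun v => by
    simp [T, LinearIsometry.extend_apply _ ⟨f v, LinearMap.mem_range_self f v⟩, hL]
  set b := EuclideanSpace.basisFun m 𝕜
  refine ⟨LinearMap.toMatrix b.toBasis b.toBasis T.toLinearEquiv,
    T.toMatrix_mem_unitaryGroup _ _, ?_⟩
  have hU : toEuclideanLin (LinearMap.toMatrix b.toBasis b.toBasis T.toLinearEquiv) =
      T.toLinearEquiv := by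
    rw [toEuclideanLin_eq_toLin_orthonormal, toLin_toMatrix]
  apply toEuclideanLin.injective
  rw [toLpLin_mul 2 2 2, hU]
  ext1 v
  exact hT v

open scoped MatrixOrder in
theorem exists_mem_unitaryGroup_mul_posSemidef (M : Matrix m m 𝕜) :
    ∃ U ∈ unitaryGroup m 𝕜, (U * M).PosSemidef := by
  have hS : (CFC.sqrt (Mᴴ * M)).PosSemidef := (CFC.sqrt_nonneg _).posSemidef
  obtain ⟨U, hU, hUM⟩ := exists_mem_unitaryGroup_mul_eq_of_conjTranspose_mul_self_eq
    (X := M) (Y := CFC.sqrt (Mᴴ * M)) <| by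
      rw [hS.isHermitian.eq, CFC.sqrt_mul_sqrt_self _ (posSemidef_conjTranspose_mul_self M).nonneg]
  exact ⟨U, hU, hUM ▸ hS⟩

theorem PosSemidef.re_trace_mul_le {P U : Matrix m m 𝕜} (hP : P.PosSemidef)
    (hU : U ∈ unitaryGroup m 𝕜) : RCLike.re (U * P).trace ≤ RCLike.re P.trace := by
  set Q : Matrix m m 𝕜 := ↑hP.isHermitian.eigenvectorUnitary
  set d := hP.isHermitian.eigenvalues
  have hQ : Q ∈ unitaryGroup m 𝕜 := hP.isHermitian.eigenvectorUnitary.2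
  have hP' : P = Q * diagonal (RCLike.ofReal ∘ d) * star Q := by
    simpa using hP.isHermitian.spectral_theorem
  set V := star Q * U * Q
  have hV : V ∈ unitaryGroup m 𝕜 := mul_mem (mul_mem (Unitary.star_mem hQ) hU) hQ
  have htr : (U * P).trace = (V * diagonal (RCLike.ofReal ∘ d)).trace := by
    rw [hP', ← mul_assoc, ← mul_assoc, trace_mul_comm, ← mul_assoc, ← mul_assoc]
  rw [htr, hP.isHermitian.trace_eq_sum_eigenvalues]
  simp only [trace, diag, mul_diagonal, Function.comp_apply, map_sum, RCLike.ofReal_re]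
  gcongr with i
  rw [RCLike.re_mul_ofReal]
  calc RCLike.re (V i i) * d i ≤ ‖V i i‖ * d i :=
        mul_le_mul_of_nonneg_right (RCLike.re_le_norm _) (hP.eigenvalues_nonneg i)
    _ ≤ 1 * d i :=
        mul_le_mul_of_nonneg_right (entry_norm_bound_of_unitary hV i i) (hP.eigenvalues_nonneg i)
    _ = d i := one_mul _

theorem re_trace_mul_sub_mul_conjTranspose {V : Matrix m m 𝕜}
    (hV : V ∈ unitaryGroup m 𝕜) (A B : Matrix m k 𝕜) :
    RCLike.re ((V * A - B) * (V * A - B)ᴴ).trace = RCLike.re (A * Aᴴ).trace +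
      RCLike.re (B * Bᴴ).trace - 2 * RCLike.re (V * (A * Bᴴ)).trace := by
  have hVV : Vᴴ * V = 1 := mem_unitaryGroup_iff'.mp hV
  have hAA : (V * A * (V * A)ᴴ).trace = (A * Aᴴ).trace := by
    rw [conjTranspose_mul, ← Matrix.mul_assoc, trace_mul_comm, ← Matrix.mul_assoc,
      ← Matrix.mul_assoc, hVV, Matrix.one_mul]
  have hBA : (B * (V * A)ᴴ).trace = star (V * (A * Bᴴ)).trace := by
    rw [← trace_conjTranspose]
    simp only [conjTranspose_mul, conjTranspose_conjTranspose, Matrix.mul_assoc]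
  rw [conjTranspose_sub, Matrix.sub_mul, Matrix.mul_sub, Matrix.mul_sub, trace_sub, trace_sub,
    trace_sub, hAA, hBA, Matrix.mul_assoc V A]
  simp only [map_sub, RCLike.star_def, RCLike.conj_re]
  ring

end Unitary

section OfReal

variable {m k o : Type*}

theorem map_ofReal_mul [Fintype k] (X : Matrix m k ℝ) (Y : Matrix k o ℝ) :
    (X * Y).map Complex.ofReal = X.map Complex.ofReal * Y.map Complex.ofReal :=
  Matrix.map_mul (f := Complex.ofRealHom)

theorem conjTranspose_map_ofReal (X : Matrix m k ℝ) :
    (X.map Complex.ofReal)ᴴ = Xᵀ.map Complex.ofReal := by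
  rw [← conjTranspose_map _ (fun _ => by simp), conjTranspose_eq_transpose_of_trivial]

theorem map_ofReal_mem_unitaryGroup [Fintype m] [DecidableEq m] {W : Matrix m m ℝ}
    (hW : W ∈ orthogonalGroup m ℝ) : W.map Complex.ofReal ∈ unitaryGroup m ℂ := by
  rw [mem_unitaryGroup_iff', star_eq_conjTranspose, conjTranspose_map_ofReal, ← map_ofReal_mul,
    ← conjTranspose_eq_transpose_of_trivial, ← star_eq_conjTranspose, mem_unitaryGroup_iff'.mp hW]
  simp

open scoped MatrixOrder in
theorem PosSemidef.map_ofReal [Fintype m] [DecidableEq m] {P : Matrix m m ℝ}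
    (hP : P.PosSemidef) : (P.map Complex.ofReal).PosSemidef := by
  obtain ⟨S, rfl⟩ := CStarAlgebra.nonneg_iff_eq_star_mul_self.mp hP.nonneg
  rw [map_ofReal_mul, star_eq_conjTranspose, conjTranspose_eq_transpose_of_trivial,
    ← conjTranspose_map_ofReal]
  exact posSemidef_conjTranspose_mul_self _

end OfReal

end Matrix

theorem frobR_eq_frobC_map {n l : ℕ} (X : Matrix (Fin n) (Fin l) ℝ) :
    frobR X = frobC (X.map Complex.ofReal) := by
  rw [frobR, frobC, conjTranspose_map_ofReal, ← map_ofReal_mul]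
  simp [trace]

theorem frobR_mul_sub_eq_frobC_map {n l : ℕ} (V : Matrix (Fin n) (Fin n) ℝ)
    (A B : Matrix (Fin n) (Fin l) ℝ) :
    frobR (V * A - B) =
      frobC (V.map Complex.ofReal * A.map Complex.ofReal - B.map Complex.ofReal) := by
  rw [frobR_eq_frobC_map, Matrix.map_sub _ (fun _ _ => Complex.ofReal_sub _ _), map_ofReal_mul]

theorem isLeast_frobC_mul_sub_of_posSemidef {n l : ℕ} {A B : Matrix (Fin n) (Fin l) ℂ}
    {W : Matrix (Fin n) (Fin n) ℂ} (hW : W ∈ unitaryGroup (Fin n) ℂ)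
    (hWAB : (W * (A * Bᴴ)).PosSemidef) :
    IsLeast {x | ∃ V ∈ unitaryGroup (Fin n) ℂ, x = frobC (V * A - B)} (frobC (W * A - B)) := by
  refine ⟨⟨W, hW, rfl⟩, ?_⟩
  rintro _ ⟨V, hV, rfl⟩
  have hle : (V * (A * Bᴴ)).trace.re ≤ (W * (A * Bᴴ)).trace.re := by
    have : V * (A * Bᴴ) = (V * star W) * (W * (A * Bᴴ)) := by
      rw [mul_assoc, ← mul_assoc (star W), mem_unitaryGroup_iff'.mp hW, one_mul]
    rw [this]
    exact hWAB.re_trace_mul_le (mul_mem hV (Unitary.star_mem hW))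
  have hWe := re_trace_mul_sub_mul_conjTranspose hW A B
  have hVe := re_trace_mul_sub_mul_conjTranspose hV A B
  simp only [RCLike.re_to_complex] at hWe hVe
  rw [frobC, frobC, hWe, hVe]
  gcongr

theorem stmt12_general (n l : ℕ) (A B : Matrix (Fin n) (Fin l) ℝ) :
    ∃ W ∈ Matrix.orthogonalGroup (Fin n) ℝ,
      (W * (A * Bᵀ)).PosSemidef ∧
      dO A B = frobR (W * A - B) ∧
      dO A B = dU (A.map (Complex.ofReal)) (B.map (Complex.ofReal)) := by
  obtain ⟨W, hW, hWAB⟩ := exists_mem_unitaryGroup_mul_posSemidef (A * Bᵀ)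
  have hleast := isLeast_frobC_mul_sub_of_posSemidef (A := A.map Complex.ofReal)
    (B := B.map Complex.ofReal) (map_ofReal_mem_unitaryGroup hW) <| by
      rw [conjTranspose_map_ofReal, ← map_ofReal_mul, ← map_ofReal_mul]
      exact hWAB.map_ofReal
  have hdO : dO A B = frobR (W * A - B) := by
    refine IsLeast.csInf_eq ⟨⟨W, hW, rfl⟩, ?_⟩
    rintro _ ⟨V, hV, rfl⟩
    rw [frobR_mul_sub_eq_frobC_map, frobR_mul_sub_eq_frobC_map]
    exact hleast.2 ⟨_, map_ofReal_mem_unitaryGroup hV, rfl⟩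
  refine ⟨W, hW, hWAB, hdO, ?_⟩
  rw [hdO, frobR_mul_sub_eq_frobC_map, dU, hleast.csInf_eq]

/-- Corollary: for real `A, B` there is `W ∈ O(n)` with `WABᵀ` positive semidefinite
symmetric and `d_{O(n)}(A,B) = ‖WA − B‖ = d_{U(n)}(A,B)`; in particular the real and
complex orbit distances agree on real matrices. -/
theorem stmt12 (n l : ℕ) (hn : 0 < n) (hl : 0 < l) (A B : Matrix (Fin n) (Fin l) ℝ) :
    ∃ W ∈ Matrix.orthogonalGroup (Fin n) ℝ,
      (W * (A * Bᵀ)).PosSemidef ∧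
      dO A B = frobR (W * A - B) ∧
      dO A B = dU (A.map (Complex.ofReal)) (B.map (Complex.ofReal)) :=
  stmt12_general n l A B
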